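/- arXiv:1412.4809 — 4 statements merged into one kernel-verified Lean document; each statement's English description precedes it below -/
import Mathlib

section
/- Let S_k(A) denote the k-th elementary symmetric function of the eigenvalues of an n×n matrix A, viewed as a polynomial function of the entries of A. At a diagonal matrix A the derivatives of S_k are: ∂_{ij}S_k(A) = S_{k−1;i}(A) if i = j and 0 otherwise; and for the second derivatives, ∂_{ij}∂_{rs}S_k(A) = S_{k−2;i,r}(A) if i = j, r = s and i ≠ r; ∂_{ij}∂_{rs}S_k(A) = −S_{k−2;i,j}(A) if i ≠ j, r = j and s = i; and ∂_{ij}∂_{rs}S_k(A) = 0 in every other case. -/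
/-!
Row expansion gives `det (A + b E_rs) = det A + b adj(A)_sr`, so `∂_rs S_k(A)` is, up to the sign
`(-1)^(k-1)`, the coefficient of `x^(n-k)` in `adj(xI - A)_sr`. At `A = diag λ + t E_ij` this
adjugate is explicit and affine in `t`: for `i = j` the matrix is diagonal, and for `i ≠ j` it
equals `adj(xI - diag λ) + t ∏_{m ≠ i,j} (x - λ_m) E_ij`, as one checks by multiplying by
`xI - A` and cancelling its nonzero determinant in the domain `ℝ[x]`. By Vieta, the coefficients
of `∏_{m ≠ i} (x - λ_m)` and `∏_{m ≠ i,j} (x - λ_m)` are `S_{k-1;i}` and `S_{k-2;i,j}`.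
-/

/-- The `k`-th elementary symmetric polynomial of `λ_1, …, λ_n`, with the convention that
`S_k = 0` for `k < 0` (in particular `S_{-1} = 0`) and `S_0 = 1`. -/
noncomputable def esymZ (n : ℕ) (k : ℤ) (lam : Fin n → ℝ) : ℝ :=
  if 0 ≤ k then ∑ t ∈ Finset.powersetCard k.toNat Finset.univ, ∏ i ∈ t, lam i else 0

/-- `S_k(A)` for an `n × n` matrix `A`: the `k`-th elementary symmetric function of the
eigenvalues of `A`, i.e. the coefficient of `(-x)^(n-k)` in `det (A - x I)`, viewed as a
polynomial function of the entries of `A`. -/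
noncomputable def SmatR (n : ℕ) (k : ℤ) (A : Matrix (Fin n) (Fin n) ℝ) : ℝ :=
  if 0 ≤ k ∧ k ≤ (n : ℤ) then (-1 : ℝ) ^ k.toNat * (Matrix.charpoly A).coeff (n - k.toNat)
  else 0

/-- `∂_{ij} G (A)`: the partial derivative of a function `G` of a matrix with respect to the
`(i,j)` entry, at the matrix `A`. -/
noncomputable def pd (n : ℕ) (G : Matrix (Fin n) (Fin n) ℝ → ℝ) (i j : Fin n)
    (A : Matrix (Fin n) (Fin n) ℝ) : ℝ :=
  deriv (fun t : ℝ => G (A + t • Matrix.single i j 1)) 0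

/-- `∂_{ij} ∂_{rs} G (A)`: the second partial derivative with respect to the `(r,s)` entry and
then the `(i,j)` entry. -/
noncomputable def pd2 (n : ℕ) (G : Matrix (Fin n) (Fin n) ℝ → ℝ) (i j r s : Fin n)
    (A : Matrix (Fin n) (Fin n) ℝ) : ℝ :=
  pd n (fun B => pd n G r s B) i j A

open Matrix Polynomial Finset Function

namespace Matrix

variable {ι R : Type*} [Fintype ι] [DecidableEq ι] [CommRing R]

theorem det_add_single (A : Matrix ι ι R) (r s : ι) (b : R) :
    det (A + single r s b) = det A + b * adjugate A s r := by
  have hA : A + single r s b = updateRow A r (A r + b • Pi.single s 1) := by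
    ext m l
    by_cases hm : m = r
    · subst hm; simp [single_apply, Pi.single_apply, eq_comm]
    · simp [hm, single_apply_of_row_ne (Ne.symm hm)]
  rw [hA, det_updateRow_add, updateRow_eq_self, det_updateRow_smul, adjugate_apply]

theorem adjugate_diagonal_add_single_self (f : ι → R) (i : ι) (c : R) :
    adjugate (diagonal f + single i i c) = adjugate (diagonal f) +
      c • diagonal (fun l => if l = i then 0 else ∏ m ∈ (univ.erase l).erase i, f m) := by
  rw [← diagonal_single, diagonal_add, adjugate_diagonal, adjugate_diagonal, ← diagonal_smul,
    diagonal_add]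
  congr 1
  funext l
  simp only [Pi.smul_apply, smul_eq_mul]
  by_cases hl : l = i
  · subst hl
    rw [if_pos rfl, mul_zero, add_zero]
    exact prod_congr rfl fun m hm => by simp [(mem_erase.mp hm).1]
  · have hi : i ∈ univ.erase l := mem_erase.mpr ⟨Ne.symm hl, mem_univ i⟩
    have hrest : ∏ m ∈ (univ.erase l).erase i, (f m + (Pi.single i c : ι → R) m) =
        ∏ m ∈ (univ.erase l).erase i, f m :=
      prod_congr rfl fun m hm => by simp [(mem_erase.mp hm).1]
    rw [if_neg hl, ← mul_prod_erase _ _ hi, ← mul_prod_erase _ _ hi, hrest]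
    simp only [Pi.single_eq_same]
    ring

theorem adjugate_eq_of_mul_eq [IsDomain R] {A B : Matrix ι ι R} (hA : det A ≠ 0)
    (h : A * B = det A • 1) : adjugate A = B := by
  have := congrArg (adjugate A * ·) h
  simp only [← Matrix.mul_assoc, adjugate_mul, smul_mul, Matrix.one_mul, Matrix.mul_smul,
    Matrix.mul_one] at this
  exact (smul_right_injective _ hA this).symm

theorem adjugate_diagonal_add_single_of_ne [IsDomain R] (f : ι → R) (hf : ∏ l, f l ≠ 0)
    {i j : ι} (hij : i ≠ j) (c : R) :
    adjugate (diagonal f + single i j c) =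
      adjugate (diagonal f) - c • single i j (∏ m ∈ (univ.erase j).erase i, f m) := by
  have hdet : det (diagonal f + single i j c) = ∏ l, f l := by
    rw [det_add_single, adjugate_diagonal, diagonal_apply_ne _ (Ne.symm hij), mul_zero, add_zero,
      det_diagonal]
  apply adjugate_eq_of_mul_eq (hdet ▸ hf)
  have hprod : ∏ m ∈ univ.erase j, f m = f i * ∏ m ∈ (univ.erase j).erase i, f m :=
    (mul_prod_erase _ _ (mem_erase.mpr ⟨hij, mem_univ i⟩)).symm
  rw [hdet, add_mul, mul_sub, mul_sub, mul_adjugate, det_diagonal, Matrix.mul_smul,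
    Matrix.mul_smul, single_mul_single_of_ne _ _ _ _ (Ne.symm hij), smul_zero, sub_zero,
    adjugate_diagonal]
  ext m l
  by_cases h : i = m ∧ j = l
  · obtain ⟨rfl, rfl⟩ := h
    simp [hprod]
  · simp [single_apply_of_ne _ _ _ _ _ h]

theorem charmatrix_add_smul_single (A : Matrix ι ι R) (i j : ι) (t : R) :
    charmatrix (A + t • single i j 1) = charmatrix A + single i j (-C t) := by
  ext m l
  by_cases h : i = m ∧ j = l
  · obtain ⟨rfl, rfl⟩ := h
    by_cases hij : i = j
    · subst hij; simp [charmatrix_apply_eq]; ring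
    · simp [charmatrix_apply_ne _ _ _ hij]; ring
  · by_cases hml : m = l
    · subst hml; simp [charmatrix_apply_eq, single_apply_of_ne _ _ _ _ _ h]
    · simp [charmatrix_apply_ne _ _ _ hml, single_apply_of_ne _ _ _ _ _ h]

theorem charpoly_add_smul_single (A : Matrix ι ι R) (r s : ι) (t : R) :
    (A + t • single r s 1).charpoly = A.charpoly - C t * adjugate (charmatrix A) s r := by
  rw [charpoly, charmatrix_add_smul_single, det_add_single, charpoly]
  ring

end Matrix

section Symmetric

variable {n : ℕ}

theorem coeff_prod_X_sub_C_eq_esymZ (ν : Fin n → ℝ) (d : ℕ) :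
    (∏ l, (X - C (ν l))).coeff d = (-1) ^ (n + d) * esymZ n (n - d) ν := by
  by_cases hd : d ≤ n
  · have hneg : ∏ l, (X - C (ν l)) = ∏ l, (X + C ((-ν) l)) := by simp [sub_eq_add_neg]
    have hsign : (-1 : ℝ) ^ (n + d) = (-1) ^ (n - d) := by
      rw [show n + d = (n - d) + 2 * d by omega, pow_add, pow_mul]; norm_num
    rw [hneg, prod_X_add_C_coeff _ _ (by simpa using hd), hsign, esymZ,
      if_pos (by omega), show ((n : ℤ) - d).toNat = n - d by omega, mul_sum]
    simp only [card_univ, Fintype.card_fin, Pi.neg_apply, prod_neg]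
    exact sum_congr rfl fun t ht => by rw [(mem_powersetCard.mp ht).2]
  · rw [coeff_eq_zero_of_natDegree_lt, esymZ, if_neg (by omega), mul_zero]
    rw [← charpoly_diagonal, charpoly_natDegree_eq_dim, Fintype.card_fin]
    omega

theorem prod_erase_X_sub_C_mul_X (ν : Fin n → ℝ) {s : Finset (Fin n)} {r : Fin n}
    (hr : r ∈ s) :
    (∏ l ∈ s.erase r, (X - C (ν l))) * X = ∏ l ∈ s, (X - C (update ν r 0 l)) := by
  rw [← mul_prod_erase s _ hr, update_self, C_0, sub_zero, mul_comm]
  congr 1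
  exact prod_congr rfl fun l hl => by rw [update_of_ne (mem_erase.mp hl).1]

theorem neg_one_pow_mul_coeff_prod_X_sub_C (ν : Fin n → ℝ) {k : ℕ} (hk : k ≤ n) (e : ℕ) :
    (-1) ^ k * (∏ l, (X - C (ν l))).coeff (n - k + e) = (-1) ^ e * esymZ n (k - e) ν := by
  rw [coeff_prod_X_sub_C_eq_esymZ, ← mul_assoc, ← pow_add,
    show k + (n + (n - k + e)) = 2 * n + e by omega, pow_add, pow_mul, neg_one_sq, one_pow,
    one_mul, show (n : ℤ) - (n - k + e : ℕ) = k - e by omega]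

theorem neg_one_pow_mul_coeff_prod_erase_erase_X_sub_C (μ : Fin n → ℝ) {i j : Fin n}
    (hij : i ≠ j) {k : ℕ} (hk : k ≤ n) :
    (-1) ^ k * (∏ l ∈ (univ.erase j).erase i, (X - C (μ l))).coeff (n - k) =
      esymZ n (k - 2) (update (update μ i 0) j 0) := by
  rw [← coeff_mul_X, ← coeff_mul_X,
    prod_erase_X_sub_C_mul_X μ (mem_erase.mpr ⟨hij, mem_univ i⟩),
    prod_erase_X_sub_C_mul_X _ (mem_univ j), add_assoc, neg_one_pow_mul_coeff_prod_X_sub_C _ hk 2]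
  norm_num

theorem SmatR_eq_coeff_charpoly {k : ℕ} (hk : k ≤ n) (A : Matrix (Fin n) (Fin n) ℝ) :
    SmatR n k A = (-1) ^ k * A.charpoly.coeff (n - k) := by
  simp [SmatR, hk]

theorem pd_SmatR_eq_coeff_adjugate {k : ℕ} (hk : k ≤ n) (A : Matrix (Fin n) (Fin n) ℝ)
    (r s : Fin n) :
    pd n (SmatR n k) r s A = -((-1) ^ k * (adjugate (charmatrix A) s r).coeff (n - k)) := by
  simp only [pd, SmatR_eq_coeff_charpoly hk, charpoly_add_smul_single, coeff_sub, coeff_C_mul]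
  simp

theorem pd_SmatR_diagonal {k : ℕ} (hk : k ≤ n) (ν : Fin n → ℝ) (r s : Fin n) :
    pd n (SmatR n k) r s (diagonal ν) = if r = s then esymZ n (k - 1) (update ν r 0) else 0 := by
  rw [pd_SmatR_eq_coeff_adjugate hk, charmatrix_diagonal, adjugate_diagonal]
  by_cases hrs : r = s
  · subst hrs
    rw [diagonal_apply_eq, ← coeff_mul_X, prod_erase_X_sub_C_mul_X ν (mem_univ r),
      neg_one_pow_mul_coeff_prod_X_sub_C _ hk 1, if_pos rfl]
    norm_num
  · rw [diagonal_apply_ne _ (Ne.symm hrs), if_neg hrs]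
    simp

theorem pd2_SmatR_diagonal_of_adjugate_eq {k : ℕ} (hk : k ≤ n) (μ : Fin n → ℝ)
    (i j r s : Fin n) (q : ℝ[X])
    (hq : ∀ c, adjugate (diagonal (fun l => X - C (μ l)) + single i j c) s r =
      adjugate (diagonal (fun l => X - C (μ l))) s r + c * q) :
    pd2 n (SmatR n k) i j r s (diagonal μ) = (-1) ^ k * q.coeff (n - k) := by
  simp only [pd2, pd_SmatR_eq_coeff_adjugate hk]
  simp only [pd, charmatrix_add_smul_single, charmatrix_diagonal, hq, coeff_add, neg_mul,
    coeff_neg, coeff_C_mul]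
  simp

theorem pd2_SmatR_diagonal_self {k : ℕ} (hk : k ≤ n) (μ : Fin n → ℝ) (i r s : Fin n) :
    pd2 n (SmatR n k) i i r s (diagonal μ) =
      if r = s ∧ i ≠ r then esymZ n (k - 2) (update (update μ i 0) r 0) else 0 := by
  rw [pd2_SmatR_diagonal_of_adjugate_eq hk μ i i r s
    (if r = s ∧ i ≠ r then ∏ m ∈ (univ.erase r).erase i, (X - C (μ m)) else 0)]
  · split_ifs with h
    · exact neg_one_pow_mul_coeff_prod_erase_erase_X_sub_C μ h.2 hk
    · simp
  · intro c
    rw [adjugate_diagonal_add_single_self, Matrix.add_apply, Matrix.smul_apply, diagonal_apply,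
      smul_eq_mul]
    rcases eq_or_ne s r with rfl | hsr
    · rcases eq_or_ne s i with rfl | hi
      · simp
      · simp [hi, hi.symm]
    · simp [hsr, hsr.symm]

theorem pd2_SmatR_diagonal_of_ne {k : ℕ} (hk : k ≤ n) (μ : Fin n → ℝ) {i j : Fin n}
    (hij : i ≠ j) (r s : Fin n) :
    pd2 n (SmatR n k) i j r s (diagonal μ) =
      if r = j ∧ s = i then -esymZ n (k - 2) (update (update μ i 0) j 0) else 0 := by
  have hf : ∏ l, (X - C (μ l)) ≠ 0 := prod_ne_zero_iff.mpr fun l _ => X_sub_C_ne_zero (μ l)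
  rw [pd2_SmatR_diagonal_of_adjugate_eq hk μ i j r s
    (-single i j (∏ m ∈ (univ.erase j).erase i, (X - C (μ m))) s r)]
  · by_cases h : r = j ∧ s = i
    · obtain ⟨rfl, rfl⟩ := h
      rw [single_apply_same, coeff_neg, mul_neg,
        neg_one_pow_mul_coeff_prod_erase_erase_X_sub_C μ hij hk, if_pos ⟨rfl, rfl⟩]
    · rw [single_apply_of_ne _ _ _ _ _ fun h' => h ⟨h'.2.symm, h'.1.symm⟩, if_neg h]
      simp
  · intro c
    rw [adjugate_diagonal_add_single_of_ne _ hf hij, Matrix.sub_apply, Matrix.smul_apply,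
      smul_eq_mul]
    ring

end Symmetric

/-- The derivatives of `S_k` at a diagonal matrix `A`:
`∂_{ij} S_k(A) = S_{k-1;i}(A)` if `i = j` and `0` otherwise, and
`∂_{ij}∂_{rs} S_k(A) = S_{k-2;i,r}(A)` if `i = j`, `r = s`, `i ≠ r`;
`= -S_{k-2;i,j}(A)` if `i ≠ j`, `r = j`, `s = i`; and `= 0` in every other case. -/
theorem statement0 (n k : ℕ) (hk : k ≤ n) (lam : Fin n → ℝ) :
    (∀ i j : Fin n,
      pd n (SmatR n (k : ℤ)) i j (Matrix.diagonal lam) =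
        if i = j then esymZ n ((k : ℤ) - 1) (Function.update lam i 0) else 0) ∧
    (∀ i j r s : Fin n,
      pd2 n (SmatR n (k : ℤ)) i j r s (Matrix.diagonal lam) =
        if i = j ∧ r = s ∧ i ≠ r then
          esymZ n ((k : ℤ) - 2) (Function.update (Function.update lam i 0) r 0)
        else if i ≠ j ∧ r = j ∧ s = i then
          -esymZ n ((k : ℤ) - 2) (Function.update (Function.update lam i 0) j 0)
        else 0) := by
  refine ⟨pd_SmatR_diagonal hk lam, fun i j r s => ?_⟩
  rcases eq_or_ne i j with rfl | hij
  · simp [pd2_SmatR_diagonal_self hk]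
  · simp [pd2_SmatR_diagonal_of_ne hk lam hij, hij]
end

section
/- For 0 ≤ k ≤ n let F(A) = S_k(A^{−1}) = S_{n−k}(A)/S_n(A), a function of invertible n×n matrices A. At a diagonal matrix A with nonzero eigenvalues λ_1,…,λ_n the derivatives of F are: ∂_{ij}F(A) = −S_{n−k;i}(A)/(λ_i S_n(A)) if i = j and 0 otherwise; for i ≠ j, ∂_{ii}∂_{jj}F(A) = S_{n−k;i,j}(A)/(λ_i λ_j S_n(A)); for i ≠ j, ∂_{ij}∂_{ji}F(A) = (S_{n−k;i}(A) + λ_i S_{n−k−1;i,j}(A))/(λ_i λ_j S_n(A)); ∂_{ii}∂_{ii}F(A) = 2 S_{n−k;i}(A)/(λ_i² S_n(A)); and all other second derivatives ∂_{ij}∂_{rs}F(A) vanish. -/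
/-- The inverse `σ_k` operator `F(A) = S_k(A⁻¹) = S_{n-k}(A) / S_n(A)`. -/
noncomputable def FinvR (n k : ℕ) (A : Matrix (Fin n) (Fin n) ℝ) : ℝ :=
  SmatR n ((n : ℤ) - k) A / SmatR n (n : ℤ) A

/-!
`S_m(A)` depends on `A` only through its characteristic polynomial, so along every line
`A + t E_ij` through a diagonal matrix `D = diag λ` it suffices to know that polynomial. When
`D` is perturbed by off-diagonal entries forming no 2-cycle, only the identity permutation
contributes to the determinant and the characteristic polynomial stays that of `D`; perturbing
by `t E_ij + u E_ji` subtracts `t u ∏_{l ≠ i, j} (X - λ_l)`. Hence, along each line, `F` is a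
quotient of functions that are affine in the parameter, and the formulas follow from the
expansion `S_m(λ) = S_m(λ|_{λ_i = 0}) + λ_i S_{m-1}(λ|_{λ_i = 0})`. The identity
`F(A) = S_k(A⁻¹)` holds because the characteristic polynomial of `A⁻¹` is the reverse of that
of `A`, scaled by `(-1)^n / det A`.
-/

open Finset Polynomial Matrix Function

theorem Multiset.esymm_cons {R : Type*} [CommSemiring R] (a : R) (s : Multiset R) (q : ℕ) :
    (a ::ₘ s).esymm (q + 1) = s.esymm (q + 1) + a * s.esymm q := by
  simp [Multiset.esymm, Multiset.powersetCard_cons, Multiset.sum_map_mul_left]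

theorem Multiset.esymm_zero_cons {R : Type*} [CommSemiring R] (s : Multiset R) (q : ℕ) :
    (0 ::ₘ s).esymm q = s.esymm q := by
  cases q with
  | zero => simp [Multiset.esymm]
  | succ q => rw [Multiset.esymm_cons, zero_mul, add_zero]

theorem Finset.map_univ_val_update {ι R : Type*} [Fintype ι] [DecidableEq ι] (f : ι → R) (i : ι)
    (a : R) : univ.val.map (update f i a) = a ::ₘ (univ.erase i).val.map f := by
  rw [← Multiset.cons_erase (mem_univ_val i), ← erase_val, Multiset.map_cons, update_self]
  exact congrArg _ (Multiset.map_congr rfl fun l hl => update_of_ne (mem_erase.1 hl).1 a f)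

section esymZ

variable {n : ℕ}

theorem esymZ_natCast (q : ℕ) (f : Fin n → ℝ) : esymZ n q f = (univ.val.map f).esymm q := by
  rw [esymZ, if_pos (by omega), Int.toNat_natCast, Finset.esymm_map_val]

theorem esymZ_of_neg {m : ℤ} (hm : m < 0) (f : Fin n → ℝ) : esymZ n m f = 0 := by
  simp [esymZ, hm.not_ge]

theorem esymZ_update (f : Fin n → ℝ) (i : Fin n) (a : ℝ) (m : ℤ) :
    esymZ n m (update f i a) = esymZ n m (update f i 0) + a * esymZ n (m - 1) (update f i 0) := by
  rcases lt_or_ge m 0 with hm | hm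
  · simp [esymZ_of_neg hm, esymZ_of_neg (show m - 1 < 0 by omega)]
  obtain ⟨q, rfl⟩ := Int.eq_ofNat_of_zero_le hm
  cases q with
  | zero => simp [esymZ]
  | succ q =>
    rw [show ((q + 1 : ℕ) : ℤ) - 1 = q by omega]
    simp only [esymZ_natCast, map_univ_val_update, Multiset.esymm_cons, Multiset.esymm_zero_cons]
    ring

theorem esymZ_eq_add_mul (f : Fin n → ℝ) (i : Fin n) (m : ℤ) :
    esymZ n m f = esymZ n m (update f i 0) + f i * esymZ n (m - 1) (update f i 0) := by
  conv_lhs => rw [← update_eq_self i f]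
  exact esymZ_update f i (f i) m

theorem esymZ_eq_add_mul_add_mul (f : Fin n → ℝ) {i j : Fin n} (hij : i ≠ j) (m : ℤ) :
    esymZ n m f = esymZ n m (update (update f i 0) j 0) +
      (f i + f j) * esymZ n (m - 1) (update (update f i 0) j 0) +
      f i * f j * esymZ n (m - 2) (update (update f i 0) j 0) := by
  have h (m : ℤ) := esymZ_eq_add_mul (update f i 0) j m
  rw [update_of_ne hij.symm] at h
  rw [esymZ_eq_add_mul f i, h, h, show m - 1 - 1 = m - 2 by ring]
  ring

theorem esymZ_self (f : Fin n → ℝ) : esymZ n n f = ∏ l, f l := by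
  have : powersetCard n (univ : Finset (Fin n)) = {univ} := by
    simpa using powersetCard_self (univ : Finset (Fin n))
  rw [esymZ, if_pos (by omega), Int.toNat_natCast, this, sum_singleton]

theorem esymZ_self_eq_zero {f : Fin n → ℝ} {i : Fin n} (hi : f i = 0) : esymZ n n f = 0 := by
  rw [esymZ_self, prod_eq_zero (mem_univ i) hi]

theorem esymZ_pred_eq_zero {f : Fin n → ℝ} {i j : Fin n} (hij : i ≠ j) (hi : f i = 0)
    (hj : f j = 0) : esymZ n (n - 1) f = 0 := by
  have h := esymZ_update f i 1 n
  rwa [show update f i 0 = f from update_eq_self_iff.2 hi.symm, esymZ_self_eq_zero hi,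
    esymZ_self_eq_zero (i := j) (by rwa [update_of_ne hij.symm]), zero_add, one_mul, eq_comm] at h

theorem prod_eq_mul_mul_esymZ_update_update (f : Fin n → ℝ) {i j : Fin n} (hij : i ≠ j) :
    ∏ l, f l = f i * f j * esymZ n (n - 2) (update (update f i 0) j 0) := by
  have hi : update (update f i 0) j 0 i = 0 := by simp [update_of_ne hij]
  have hj : update (update f i 0) j 0 j = 0 := update_self ..
  rw [← esymZ_self, esymZ_eq_add_mul_add_mul f hij, esymZ_self_eq_zero hi,
    esymZ_pred_eq_zero hij hi hj]
  ring

end esymZ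

theorem Equiv.Perm.eq_one_or_eq_swap_of_forall_ne {ι : Type*} [DecidableEq ι] {σ : Equiv.Perm ι}
    {i j r s : ι} (hij : i ≠ j) (hrs : r ≠ s)
    (h : ∀ l, σ l ≠ l → σ l = i ∧ l = j ∨ σ l = r ∧ l = s) :
    σ = 1 ∨ r = j ∧ s = i ∧ σ = Equiv.swap i j := by
  have hinj : ∀ a b, σ a = σ b → a = b := fun a b => (σ.injective ·)
  have hi := h i
  have hj := h j
  have hr := h r
  by_cases hσj : σ j = j
  · left
    ext l
    have hl := h l
    simp only [Equiv.Perm.one_apply]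
    grind
  · right
    obtain ⟨rfl, rfl⟩ : r = j ∧ s = i := by grind
    refine ⟨rfl, rfl, Equiv.ext fun l => ?_⟩
    have hl := h l
    simp only [Equiv.swap_apply_def]
    grind

namespace Matrix

variable {ι R : Type*} [Fintype ι] [DecidableEq ι] [CommRing R]

theorem sign_smul_prod_eq_zero_of_offDiag {M : Matrix ι ι R} {i j r s : ι} (hij : i ≠ j)
    (hrs : r ≠ s) (hM : ∀ a b, a ≠ b → M a b ≠ 0 → a = i ∧ b = j ∨ a = r ∧ b = s)
    {σ : Equiv.Perm ι} (h1 : σ ≠ 1) (hswap : ¬(r = j ∧ s = i ∧ σ = Equiv.swap i j)) :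
    Equiv.Perm.sign σ • ∏ l, M (σ l) l = 0 := by
  by_cases h0 : ∃ l, M (σ l) l = 0
  · obtain ⟨l, hl⟩ := h0
    rw [prod_eq_zero (f := fun l => M (σ l) l) (mem_univ l) hl, smul_zero]
  exact (hswap ((Equiv.Perm.eq_one_or_eq_swap_of_forall_ne hij hrs fun l hl =>
    hM _ _ hl fun h => h0 ⟨l, h⟩).resolve_left h1)).elim

theorem det_eq_prod_diag_of_offDiag {M : Matrix ι ι R} {i j r s : ι} (hij : i ≠ j) (hrs : r ≠ s)
    (hji : ¬(r = j ∧ s = i)) (hM : ∀ a b, a ≠ b → M a b ≠ 0 → a = i ∧ b = j ∨ a = r ∧ b = s) :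
    M.det = ∏ l, M l l := by
  rw [det_apply, sum_eq_single 1 (fun σ _ hσ => sign_smul_prod_eq_zero_of_offDiag hij hrs hM hσ
    fun h => hji ⟨h.1, h.2.1⟩) (by simp), Equiv.Perm.sign_one, one_smul]
  rfl

theorem det_eq_prod_diag_sub_of_offDiag_swap {M : Matrix ι ι R} {i j : ι} (hij : i ≠ j)
    (hM : ∀ a b, a ≠ b → M a b ≠ 0 → a = i ∧ b = j ∨ a = j ∧ b = i) :
    M.det = ∏ l, M l l - M i j * M j i * ∏ l ∈ (univ.erase i).erase j, M l l := by
  have hswap : ∏ l, M (Equiv.swap i j l) l =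
      M j i * (M i j * ∏ l ∈ (univ.erase i).erase j, M l l) := by
    rw [← mul_prod_erase univ _ (mem_univ i), ← mul_prod_erase (univ.erase i) _
      (mem_erase.2 ⟨hij.symm, mem_univ j⟩), Equiv.swap_apply_left, Equiv.swap_apply_right]
    congr 2
    refine prod_congr rfl fun l hl => ?_
    rw [Equiv.swap_apply_of_ne_of_ne (ne_of_mem_erase (mem_of_mem_erase hl)) (ne_of_mem_erase hl)]
  rw [det_apply, sum_eq_add 1 (Equiv.swap i j) (fun h => hij (by simpa using congr($h i)))
    (fun σ _ hσ => sign_smul_prod_eq_zero_of_offDiag hij hij.symm hM hσ.1 fun h => hσ.2 h.2.2)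
    (by simp) (by simp), Equiv.Perm.sign_one, one_smul, Equiv.Perm.sign_swap hij, hswap]
  simp only [Equiv.Perm.coe_one, id_eq, Units.neg_smul, one_smul]
  ring

theorem charpoly_diagonal_add_smul_single_add_smul_single (x : ι → R) {i j r s : ι} (hij : i ≠ j)
    (hrs : r ≠ s) (hji : ¬(r = j ∧ s = i)) (t u : R) :
    (diagonal x + t • single i j 1 + u • single r s 1).charpoly = (diagonal x).charpoly := by
  rw [charpoly, det_eq_prod_diag_of_offDiag hij hrs hji, charpoly_diagonal]
  · refine prod_congr rfl fun l _ => ?_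
    simp only [smul_single, smul_eq_mul, mul_one, charmatrix_apply_eq, add_apply,
      diagonal_apply_eq, single_apply, map_add, sub_right_inj]
    grind
  · intro a b hab h
    simp only [smul_single, smul_eq_mul, mul_one, ne_eq, hab, not_false_eq_true,
      charmatrix_apply_ne, add_apply, diagonal_apply_ne, single_apply, zero_add, map_add,
      neg_add_rev] at h
    grind

theorem charpoly_diagonal_add_smul_single (x : ι → R) {i j : ι} (hij : i ≠ j) (t : R) :
    (diagonal x + t • single i j 1).charpoly = (diagonal x).charpoly := by
  simpa using charpoly_diagonal_add_smul_single_add_smul_single x hij hij (by tauto) t 0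

/-- Multiplying by `X ^ 2` turns the product over the indices other than `i, j` into the
characteristic polynomial of a diagonal matrix. -/
theorem X_sq_mul_charpoly_diagonal_add_smul_single_add_smul_single (x : ι → R) {i j : ι}
    (hij : i ≠ j) (t u : R) :
    X ^ 2 * (diagonal x + t • single i j 1 + u • single j i 1).charpoly =
      X ^ 2 * (diagonal x).charpoly -
        C (t * u) * (diagonal (update (update x i 0) j 0)).charpoly := by
  set M := diagonal x + t • single i j 1 + u • single j i 1
  set s := (univ.erase i).erase j
  have hsplit (f : ι → R[X]) : ∏ l, f l = f i * (f j * ∏ l ∈ s, f l) := by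
    rw [← mul_prod_erase univ _ (mem_univ i),
      ← mul_prod_erase _ _ (mem_erase.2 ⟨hij.symm, mem_univ j⟩)]
  have hdiag (l : ι) : M.charmatrix l l = X - C (x l) := by
    simp only [M, smul_single, smul_eq_mul, mul_one, charmatrix_apply_eq, add_apply,
      diagonal_apply_eq, single_apply, map_add, sub_right_inj]
    grind
  have hoff : ∀ a b, a ≠ b → M.charmatrix a b ≠ 0 → a = i ∧ b = j ∨ a = j ∧ b = i := by
    intro a b hab h
    simp only [M, smul_single, smul_eq_mul, mul_one, ne_eq, hab, not_false_eq_true,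
      charmatrix_apply_ne, add_apply, diagonal_apply_ne, single_apply, zero_add, map_add,
      neg_add_rev] at h
    grind
  have hupd : ∀ l ∈ s, X - C (update (update x i 0) j 0 l) = X - C (x l) := fun l hl => by
    rw [update_of_ne (ne_of_mem_erase hl), update_of_ne (ne_of_mem_erase (mem_of_mem_erase hl))]
  have hij' : M.charmatrix i j = -C t := by simp [M, hij]
  have hji' : M.charmatrix j i = -C u := by simp [M, hij, hij.symm]
  rw [charpoly, det_eq_prod_diag_sub_of_offDiag_swap hij hoff, charpoly_diagonal,
    charpoly_diagonal]
  simp only [hdiag]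
  rw [hsplit (fun l => X - C (x l)), hsplit (fun l => X - C (update (update x i 0) j 0 l)),
    prod_congr rfl hupd]
  simp only [hij', hji', update_self, update_of_ne hij, C_0, C_mul]
  ring

end Matrix

theorem Matrix.diagonal_add_smul_single_self {ι R : Type*} [DecidableEq ι] [Semiring R]
    (x : ι → R) (i : ι) (t : R) :
    diagonal x + t • single i i 1 = diagonal (update x i (x i + t)) := by
  ext a b
  simp only [add_apply, diagonal_apply, smul_apply, single_apply, update_apply, smul_eq_mul]
  grind

section SmatR

variable {n : ℕ}

theorem SmatR_natCast {q : ℕ} (hq : q ≤ n) (A : Matrix (Fin n) (Fin n) ℝ) :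
    SmatR n q A = (-1) ^ q * A.charpoly.coeff (n - q) := by
  rw [SmatR, if_pos ⟨by omega, by omega⟩, Int.toNat_natCast]

theorem SmatR_of_neg {m : ℤ} (hm : m < 0) (A : Matrix (Fin n) (Fin n) ℝ) : SmatR n m A = 0 := by
  simp [SmatR, hm.not_ge]

theorem SmatR_eq_zpow_mul_coeff {m : ℤ} (hm : m ≤ n) (A : Matrix (Fin n) (Fin n) ℝ) :
    SmatR n m A = (-1) ^ m * A.charpoly.coeff (n - m).toNat := by
  rcases lt_or_ge m 0 with hm0 | hm0
  · rw [SmatR_of_neg hm0, coeff_eq_zero_of_natDegree_lt, mul_zero]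
    rw [charpoly_natDegree_eq_dim, Fintype.card_fin]
    omega
  · obtain ⟨q, rfl⟩ := Int.eq_ofNat_of_zero_le hm0
    rw [SmatR_natCast (by omega), zpow_natCast, show ((n : ℤ) - q).toNat = n - q by omega]

theorem SmatR_self (A : Matrix (Fin n) (Fin n) ℝ) : SmatR n n A = A.det := by
  rw [SmatR_natCast le_rfl, Nat.sub_self, det_eq_sign_charpoly_coeff, Fintype.card_fin]

theorem SmatR_diagonal (x : Fin n → ℝ) (m : ℤ) : SmatR n m (diagonal x) = esymZ n m x := by
  rcases lt_or_ge m 0 with hm0 | hm0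
  · rw [SmatR_of_neg hm0, esymZ_of_neg hm0]
  obtain ⟨q, rfl⟩ := Int.eq_ofNat_of_zero_le hm0
  by_cases hq : q ≤ n
  · have hcard : Multiset.card (univ.val.map x) = n := by simp
    have hprod : ∏ l, (X - C (x l)) = ((univ.val.map x).map fun a => X - C a).prod := by
      rw [Multiset.map_map]
      rfl
    rw [SmatR_natCast hq, charpoly_diagonal, hprod, Multiset.prod_X_sub_C_coeff _ (by omega),
      hcard, Nat.sub_sub_self hq, esymZ_natCast, ← mul_assoc, ← mul_pow]
    norm_num
  · rw [SmatR, if_neg (by omega), esymZ, if_pos hm0, Int.toNat_natCast,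
      powersetCard_eq_empty.2 (by simpa using hq), sum_empty]

theorem SmatR_inv {k : ℕ} (hk : k ≤ n) (B : Matrix (Fin n) (Fin n) ℝ) (hB : IsUnit B.det) :
    SmatR n k B⁻¹ = SmatR n ((n : ℤ) - k) B / SmatR n n B := by
  rw [show (n : ℤ) - k = ((n - k : ℕ) : ℤ) by omega]
  have hcoeff : B⁻¹.charpoly.coeff (n - k) = (-1) ^ n * B.det⁻¹ * B.charpoly.coeff k := by
    rw [charpoly_inv B ((isUnit_iff_isUnit_det B).2 hB), ← reverse_charpoly, Ring.inverse_eq_inv',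
      Fintype.card_fin, show (-1 : ℝ[X]) ^ n * C B.det⁻¹ = C ((-1) ^ n * B.det⁻¹) by simp,
      coeff_C_mul, coeff_reverse, charpoly_natDegree_eq_dim, Fintype.card_fin,
      revAt_le (by omega), Nat.sub_sub_self hk]
  have hsign : (-1 : ℝ) ^ n = (-1) ^ (n - k) * (-1) ^ k := by
    rw [← pow_add, Nat.sub_add_cancel hk]
  rw [SmatR_natCast hk, SmatR_natCast (by omega), SmatR_self, hcoeff, Nat.sub_sub_self hk, hsign]
  field_simp
  rw [← pow_mul, mul_comm k 2, pow_mul, neg_one_sq, one_pow, one_mul]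

theorem SmatR_of_X_sq_mul_charpoly_eq {A B D : Matrix (Fin n) (Fin n) ℝ} {c : ℝ}
    (h : X ^ 2 * A.charpoly = X ^ 2 * B.charpoly - C c * D.charpoly) {m : ℤ} (hm : m ≤ n) :
    SmatR n m A = SmatR n m B - c * SmatR n (m - 2) D := by
  have hcoeff := congrArg (coeff · ((n - m).toNat + 2)) h
  simp only [coeff_X_pow_mul, coeff_sub, coeff_C_mul] at hcoeff
  rw [SmatR_eq_zpow_mul_coeff hm, SmatR_eq_zpow_mul_coeff hm, SmatR_eq_zpow_mul_coeff (by omega),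
    hcoeff, show (n - (m - 2)).toNat = (n - m).toNat + 2 by omega,
    zpow_sub₀ (by norm_num : (-1 : ℝ) ≠ 0), even_two.neg_one_zpow, div_one]
  ring

end SmatR

theorem hasDerivAt_add_mul_div_add_mul (a b c d : ℝ) (hc : c ≠ 0) :
    HasDerivAt (fun u => (a + u * b) / (c + u * d)) ((b * c - a * d) / c ^ 2) 0 := by
  have hnum := ((hasDerivAt_id (0 : ℝ)).mul_const b).const_add a
  have hden := ((hasDerivAt_id (0 : ℝ)).mul_const d).const_add c
  refine (hnum.div hden (by simpa using hc)).congr_deriv ?_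
  simp

theorem hasDerivAt_add_mul_div_mul (a b c p : ℝ) (hc : c ≠ 0) (hp : p ≠ 0) :
    HasDerivAt (fun t => (a + (c + t) * b) / ((c + t) * p)) (-a / (c ^ 2 * p)) 0 := by
  convert hasDerivAt_add_mul_div_add_mul (a + c * b) b (c * p) p (mul_ne_zero hc hp) using 1
  · ext t
    ring_nf
  · field_simp
    ring

section FinvR

open Filter Topology

variable {n : ℕ} (k : ℕ)

theorem FinvR_congr {A B : Matrix (Fin n) (Fin n) ℝ} (h : A.charpoly = B.charpoly) :
    FinvR n k A = FinvR n k B := by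
  simp only [FinvR, SmatR, h]

theorem FinvR_diagonal (x : Fin n → ℝ) :
    FinvR n k (diagonal x) = esymZ n (n - k) x / ∏ l, x l := by
  rw [FinvR, SmatR_diagonal, SmatR_diagonal, esymZ_self]

theorem FinvR_diagonal_add_smul_single_add_smul_single (x : Fin n → ℝ) {i j : Fin n}
    (hij : i ≠ j) (t u : ℝ) :
    FinvR n k (diagonal x + t • single i j 1 + u • single j i 1) =
      (esymZ n (n - k) x - t * u * esymZ n (n - k - 2) (update (update x i 0) j 0)) /
        (∏ l, x l - t * u * esymZ n (n - 2) (update (update x i 0) j 0)) := by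
  have h := X_sq_mul_charpoly_diagonal_add_smul_single_add_smul_single x hij t u
  rw [FinvR, SmatR_of_X_sq_mul_charpoly_eq h (by omega), SmatR_of_X_sq_mul_charpoly_eq h le_rfl,
    SmatR_diagonal, SmatR_diagonal, SmatR_diagonal, SmatR_diagonal, esymZ_self]

theorem pd2_eq_deriv (G : Matrix (Fin n) (Fin n) ℝ → ℝ) (i j r s : Fin n)
    (A : Matrix (Fin n) (Fin n) ℝ) :
    pd2 n G i j r s A = deriv (fun t : ℝ => pd n G r s (A + t • single i j (1 : ℝ))) 0 :=
  rfl

theorem pd_eq_zero_of_forall (G : Matrix (Fin n) (Fin n) ℝ → ℝ) (r s : Fin n)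
    (A : Matrix (Fin n) (Fin n) ℝ) (h : ∀ u : ℝ, G (A + u • single r s 1) = G A) :
    pd n G r s A = 0 := by
  simp only [pd, h, deriv_const]

theorem pd_FinvR_diagonal_of_ne (x : Fin n → ℝ) {r s : Fin n} (hrs : r ≠ s) :
    pd n (FinvR n k) r s (diagonal x) = 0 :=
  pd_eq_zero_of_forall _ r s _ fun u => FinvR_congr k (charpoly_diagonal_add_smul_single x hrs u)

theorem pd_FinvR_diagonal_self {x : Fin n → ℝ} (hx : ∀ l, x l ≠ 0) (i : Fin n) :
    pd n (FinvR n k) i i (diagonal x) = -esymZ n (n - k) (update x i 0) / (x i * ∏ l, x l) := by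
  set P := ∏ l ∈ univ \ {i}, x l
  have hprod : ∏ l, x l = x i * P := prod_eq_mul_prod_sdiff_singleton i x (by simp)
  have hF (t : ℝ) : FinvR n k (diagonal x + t • single i i 1) =
      (esymZ n (n - k) (update x i 0) + (x i + t) * esymZ n (n - k - 1) (update x i 0)) /
        ((x i + t) * P) := by
    rw [diagonal_add_smul_single_self, FinvR_diagonal, esymZ_update,
      prod_update_of_mem (mem_univ i)]
  rw [pd, funext hF, (hasDerivAt_add_mul_div_mul _ _ _ _ (hx i)
    (prod_ne_zero_iff.2 fun l _ => hx l)).deriv, hprod]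
  ring

theorem pd_FinvR_diagonal_add_smul_single_self_eventuallyEq {x : Fin n → ℝ} (hx : ∀ l, x l ≠ 0)
    (i j : Fin n) :
    (fun t => pd n (FinvR n k) j j (diagonal x + t • single i i 1)) =ᶠ[𝓝 0]
      fun t => -esymZ n (n - k) (update (update x i (x i + t)) j 0) /
        (update x i (x i + t) j * ((x i + t) * ∏ l ∈ univ \ {i}, x l)) := by
  have hev : ∀ᶠ t in 𝓝 (0 : ℝ), x i + t ≠ 0 :=
    ((continuous_const_add (x i)).tendsto 0).eventually_ne (by simpa using hx i)
  filter_upwards [hev] with t ht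
  have hxt (l : Fin n) : update x i (x i + t) l ≠ 0 := by
    rcases eq_or_ne l i with rfl | hl
    · simpa using ht
    · simpa [hl] using hx l
  rw [diagonal_add_smul_single_self, pd_FinvR_diagonal_self k hxt, prod_update_of_mem (mem_univ i)]

theorem pd2_FinvR_diagonal_self_self {x : Fin n → ℝ} (hx : ∀ l, x l ≠ 0) {i j : Fin n}
    (hij : i ≠ j) :
    pd2 n (FinvR n k) i i j j (diagonal x) =
      esymZ n (n - k) (update (update x i 0) j 0) / (x i * x j * ∏ l, x l) := by
  set P := ∏ l ∈ univ \ {i}, x l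
  have hprod : ∏ l, x l = x i * P := prod_eq_mul_prod_sdiff_singleton i x (by simp)
  have hP : P ≠ 0 := prod_ne_zero_iff.2 fun l _ => hx l
  have hcomm (y : ℝ) : update (update x i y) j 0 = update (update x j 0) i y :=
    update_comm hij y 0 x
  have hderiv := hasDerivAt_add_mul_div_mul (-esymZ n (n - k) (update (update x j 0) i 0))
    (-esymZ n (n - k - 1) (update (update x j 0) i 0)) (x i) (x j * P) (hx i)
    (mul_ne_zero (hx j) hP)
  rw [pd2_eq_deriv, (hderiv.congr_of_eventuallyEq
    ((pd_FinvR_diagonal_add_smul_single_self_eventuallyEq k hx i j).trans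
      (Eventually.of_forall fun t => ?_))).deriv, hcomm, hprod]
  · field_simp
  · dsimp only
    rw [hcomm, esymZ_update, update_of_ne hij.symm]
    ring

theorem pd2_FinvR_diagonal_self {x : Fin n → ℝ} (hx : ∀ l, x l ≠ 0) (i : Fin n) :
    pd2 n (FinvR n k) i i i i (diagonal x) =
      2 * esymZ n (n - k) (update x i 0) / (x i ^ 2 * ∏ l, x l) := by
  set P := ∏ l ∈ univ \ {i}, x l
  set a := esymZ n (n - k) (update x i 0)
  have hxi := hx i
  have hprod : ∏ l, x l = x i * P := prod_eq_mul_prod_sdiff_singleton i x (by simp)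
  have hP : P ≠ 0 := prod_ne_zero_iff.2 fun l _ => hx l
  have hy := (hasDerivAt_id (0 : ℝ)).const_add (x i)
  have hden : HasDerivAt (fun t => (x i + t) * ((x i + t) * P)) (2 * x i * P) 0 := by
    refine (hy.mul (hy.mul_const P)).congr_deriv ?_
    simp only [id_eq, add_zero, one_mul]
    ring
  have hderiv : HasDerivAt (fun t => -a / ((x i + t) * ((x i + t) * P)))
      (2 * a / (x i ^ 3 * P)) 0 := by
    refine ((hasDerivAt_const (0 : ℝ) (-a)).div hden (by simp [hxi, hP])).congr_deriv ?_
    rw [add_zero]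
    field_simp
    ring
  rw [pd2_eq_deriv, (hderiv.congr_of_eventuallyEq
    ((pd_FinvR_diagonal_add_smul_single_self_eventuallyEq k hx i i).trans
      (Eventually.of_forall fun t => ?_))).deriv, hprod]
  · field_simp
  · simp only [update_idem, update_self, a, P]

theorem pd2_FinvR_diagonal_swap {x : Fin n → ℝ} (hx : ∀ l, x l ≠ 0) {i j : Fin n} (hij : i ≠ j) :
    pd2 n (FinvR n k) i j j i (diagonal x) =
      (esymZ n (n - k) (update x i 0) + x i * esymZ n (n - k - 1) (update (update x i 0) j 0)) /
        (x i * x j * ∏ l, x l) := by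
  set g := update (update x i 0) j 0
  set A := esymZ n (n - k) x with hA
  set B := esymZ n (n - k - 2) g
  set S := ∏ l, x l
  set T := esymZ n (n - 2) g
  have hS : S ≠ 0 := prod_ne_zero_iff.2 fun l _ => hx l
  have hST : S = x i * x j * T := prod_eq_mul_mul_esymZ_update_update x hij
  have hinner (t : ℝ) :
      pd n (FinvR n k) j i (diagonal x + t • single i j 1) = t * ((A * T - B * S) / S ^ 2) := by
    have hF (u : ℝ) : FinvR n k (diagonal x + t • single i j 1 + u • single j i 1) =
        (A + u * (-t * B)) / (S + u * (-t * T)) := by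
      rw [FinvR_diagonal_add_smul_single_add_smul_single k x hij]
      ring
    rw [pd, funext hF, (hasDerivAt_add_mul_div_add_mul _ _ _ _ hS).deriv]
    ring
  have hxi (m : ℤ) : esymZ n m (update x i 0) = esymZ n m g + x j * esymZ n (m - 1) g := by
    simpa [update_of_ne hij.symm] using esymZ_eq_add_mul (update x i 0) j m
  rw [pd2_eq_deriv, funext hinner, (hasDerivAt_mul_const _).deriv, hA,
    esymZ_eq_add_mul_add_mul x hij, hxi, hST]
  field_simp
  ring

theorem pd2_FinvR_diagonal_eq_zero (x : Fin n → ℝ) {i j r s : Fin n} (h1 : ¬(i = j ∧ r = s))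
    (h2 : ¬(i ≠ j ∧ r = j ∧ s = i)) : pd2 n (FinvR n k) i j r s (diagonal x) = 0 := by
  refine pd_eq_zero_of_forall _ i j _ fun t => ?_
  rcases eq_or_ne i j with rfl | hij
  · have hrs : r ≠ s := fun h => h1 ⟨rfl, h⟩
    rw [diagonal_add_smul_single_self, pd_FinvR_diagonal_of_ne k _ hrs,
      pd_FinvR_diagonal_of_ne k _ hrs]
  rcases eq_or_ne r s with rfl | hrs
  · simp only [pd]
    congr 1
    funext u
    rw [add_right_comm, diagonal_add_smul_single_self,
      FinvR_congr k (charpoly_diagonal_add_smul_single _ hij t)]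
  · rw [pd_FinvR_diagonal_of_ne k x hrs]
    refine pd_eq_zero_of_forall _ r s _ fun u => FinvR_congr k ?_
    rw [charpoly_diagonal_add_smul_single_add_smul_single x hij hrs (by tauto),
      charpoly_diagonal_add_smul_single x hij]

end FinvR

/-- Lemma 2.2: derivatives of the inverse `σ_k` operator `F(A) = S_k(A⁻¹) = S_{n-k}(A)/S_n(A)`
at a diagonal matrix `A` with nonzero eigenvalues `λ_1, …, λ_n`. -/
theorem statement1 (n k : ℕ) (hk : k ≤ n) (lam : Fin n → ℝ) (hlam : ∀ i, lam i ≠ 0) :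
    -- `F(A) = S_k(A⁻¹)` on invertible matrices
    (∀ B : Matrix (Fin n) (Fin n) ℝ, IsUnit B.det → FinvR n k B = SmatR n (k : ℤ) B⁻¹) ∧
    -- first derivatives
    (∀ i j : Fin n,
      pd n (FinvR n k) i j (Matrix.diagonal lam) =
        if i = j then
          -(esymZ n ((n : ℤ) - k) (Function.update lam i 0)) / (lam i * esymZ n (n : ℤ) lam)
        else 0) ∧
    -- `∂_{ii}∂_{jj} F(A)` for `i ≠ j`
    (∀ i j : Fin n, i ≠ j →
      pd2 n (FinvR n k) i i j j (Matrix.diagonal lam) =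
        esymZ n ((n : ℤ) - k) (Function.update (Function.update lam i 0) j 0) /
          (lam i * lam j * esymZ n (n : ℤ) lam)) ∧
    -- `∂_{ij}∂_{ji} F(A)` for `i ≠ j`
    (∀ i j : Fin n, i ≠ j →
      pd2 n (FinvR n k) i j j i (Matrix.diagonal lam) =
        (esymZ n ((n : ℤ) - k) (Function.update lam i 0) +
            lam i * esymZ n ((n : ℤ) - k - 1) (Function.update (Function.update lam i 0) j 0)) /
          (lam i * lam j * esymZ n (n : ℤ) lam)) ∧
    -- `∂_{ii}∂_{ii} F(A)`
    (∀ i : Fin n,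
      pd2 n (FinvR n k) i i i i (Matrix.diagonal lam) =
        2 * esymZ n ((n : ℤ) - k) (Function.update lam i 0) /
          (lam i ^ 2 * esymZ n (n : ℤ) lam)) ∧
    -- all other second derivatives vanish
    (∀ i j r s : Fin n, ¬(i = j ∧ r = s) → ¬(i ≠ j ∧ r = j ∧ s = i) →
      pd2 n (FinvR n k) i j r s (Matrix.diagonal lam) = 0) := by
  have hS := esymZ_self lam
  refine ⟨fun B hB => (SmatR_inv hk B hB).symm, fun i j => ?_, fun i j hij => ?_,
    fun i j hij => ?_, fun i => ?_, fun i j r s h1 h2 => pd2_FinvR_diagonal_eq_zero k lam h1 h2⟩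
  · split_ifs with hij
    · subst hij
      rw [hS, pd_FinvR_diagonal_self k hlam]
    · exact pd_FinvR_diagonal_of_ne k lam hij
  · rw [hS, pd2_FinvR_diagonal_self_self k hlam hij]
  · rw [hS, pd2_FinvR_diagonal_swap k hlam hij]
  · rw [hS, pd2_FinvR_diagonal_self k hlam]
end

section
/- Fix 0 ≤ k ≤ n and λ_1,…,λ_n > 0. For an (n−k)-element subset I ⊆ {1,…,n} write λ_I = Π_{i∈I} λ_i and let E_I be the n×n matrix with (E_I)_{ij} = 1 if both i ∉ I and j ∉ I, and 0 otherwise. Then the n×n matrix M with entries M_{ij} = S_{n−k;i,j}(λ) + δ_{ij} S_{n−k;i}(λ) satisfies M = Σ_{|I| = n−k} λ_I E_I; in particular M is positive semidefinite. -/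
/-- `S_{k;i}(λ)`: the `k`-th elementary symmetric polynomial after setting `λ_i = 0`. -/
noncomputable def esymZdel1 (n : ℕ) (k : ℤ) (lam : Fin n → ℝ) (i : Fin n) : ℝ :=
  esymZ n k (Function.update lam i 0)

/-- `S_{k;i,j}(λ)`: the `k`-th elementary symmetric polynomial after setting `λ_i = λ_j = 0`,
taken to be `0` when the indices `i, j` are not distinct. -/
noncomputable def esymZdel2 (n : ℕ) (k : ℤ) (lam : Fin n → ℝ) (i j : Fin n) : ℝ :=
  if i = j then 0 else esymZ n k (Function.update (Function.update lam i 0) j 0)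

/-- The matrix `E_I` for `I ⊆ {1,…,n}`: `(E_I)_{ij} = 1` if `i ∉ I` and `j ∉ I`, else `0`. -/
def EI (n : ℕ) (I : Finset (Fin n)) : Matrix (Fin n) (Fin n) ℝ :=
  Matrix.of fun i j => if i ∉ I ∧ j ∉ I then 1 else 0

/-! Both sides have `(i, j)` entry `∑ λ_I` over the `(n - k)`-subsets `I` containing neither `i`
nor `j`, since setting `λ_i = 0` kills exactly the monomials `λ_I` with `i ∈ I`. Each `E_I` is the
rank-one matrix `v vᵀ`, `v` the indicator vector of the complement of `I`, so `M` is a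
nonnegative combination of positive semidefinite matrices. -/

open Finset Matrix

theorem sum_powersetCard_prod_eq_sum_disjoint {ι R : Type*} [Fintype ι] [DecidableEq ι]
    [CommSemiring R] (m : ℕ) (s : Finset ι) {f g : ι → R} (hg₀ : ∀ j ∈ s, g j = 0)
    (hgf : ∀ j ∉ s, g j = f j) :
    ∑ t ∈ powersetCard m univ, ∏ j ∈ t, g j
      = ∑ t ∈ powersetCard m univ with Disjoint s t, ∏ j ∈ t, f j := by
  rw [sum_filter]
  refine sum_congr rfl fun t _ => ?_
  split_ifs with hst
  · exact prod_congr rfl fun j hj => hgf j (disjoint_right.mp hst hj)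
  · obtain ⟨j, hjs, hjt⟩ := not_disjoint_iff.mp hst
    exact prod_eq_zero hjt (hg₀ j hjs)

variable {n : ℕ}

theorem esymZdel1_natCast (m : ℕ) (lam : Fin n → ℝ) (i : Fin n) :
    esymZdel1 n m lam i = ∑ t ∈ powersetCard m univ with i ∉ t, ∏ j ∈ t, lam j := by
  rw [esymZdel1, esymZ, if_pos (Int.natCast_nonneg m), Int.toNat_natCast,
    sum_powersetCard_prod_eq_sum_disjoint m {i} (f := lam) (by simp) fun j hj =>
      Function.update_of_ne (by simpa using hj) _ _]
  simp

theorem esymZdel2_natCast_of_ne (m : ℕ) (lam : Fin n → ℝ) {i j : Fin n} (hij : i ≠ j) :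
    esymZdel2 n m lam i j
      = ∑ t ∈ powersetCard m univ with i ∉ t ∧ j ∉ t, ∏ l ∈ t, lam l := by
  rw [esymZdel2, if_neg hij, esymZ, if_pos (Int.natCast_nonneg m), Int.toNat_natCast,
    sum_powersetCard_prod_eq_sum_disjoint m {i, j} (f := lam) (by simp [Function.update_apply])
      fun l hl => by simp_all]
  simp

theorem of_esymZdel_eq_sum_smul_EI (m : ℕ) (lam : Fin n → ℝ) :
    (Matrix.of fun i j : Fin n =>
        esymZdel2 n m lam i j + if i = j then esymZdel1 n m lam i else 0)
      = ∑ I ∈ powersetCard m univ, (∏ i ∈ I, lam i) • EI n I := by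
  ext i j
  simp only [of_apply, Matrix.sum_apply, Matrix.smul_apply, EI, smul_eq_mul, mul_ite, mul_one, mul_zero,
    ← sum_filter]
  by_cases hij : i = j
  · subst hij
    simp [esymZdel2, esymZdel1_natCast]
  · simp [esymZdel2_natCast_of_ne m lam hij, hij]

theorem EI_eq_vecMulVec (I : Finset (Fin n)) :
    EI n I = vecMulVec (fun i => if i ∉ I then 1 else 0) (fun i => if i ∉ I then 1 else 0) := by
  ext i j
  by_cases hi : i ∈ I <;> by_cases hj : j ∈ I <;> simp [EI, vecMulVec_apply, hi, hj]

theorem posSemidef_EI (I : Finset (Fin n)) : (EI n I).PosSemidef := by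
  rw [EI_eq_vecMulVec]
  exact posSemidef_vecMulVec_self_star _

/-- The matrix `M` with `M_{ij} = S_{n-k;i,j}(λ) + δ_{ij} S_{n-k;i}(λ)` satisfies
`M = Σ_{|I| = n-k} λ_I E_I`, where `λ_I = Π_{i ∈ I} λ_i`; in particular `M` is positive
semidefinite. -/
theorem statement3 (n k : ℕ) (hk : k ≤ n) (lam : Fin n → ℝ) (hlam : ∀ i, 0 < lam i) :
    (Matrix.of fun i j : Fin n =>
        esymZdel2 n ((n : ℤ) - k) lam i j + if i = j then esymZdel1 n ((n : ℤ) - k) lam i else 0)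
      = ∑ I ∈ Finset.powersetCard (n - k) (Finset.univ : Finset (Fin n)),
          (∏ i ∈ I, lam i) • EI n I ∧
    (Matrix.of fun i j : Fin n =>
        esymZdel2 n ((n : ℤ) - k) lam i j +
          if i = j then esymZdel1 n ((n : ℤ) - k) lam i else 0).PosSemidef := by
  rw [← Nat.cast_sub hk, of_esymZdel_eq_sum_smul_EI]
  refine ⟨rfl, posSemidef_sum _ fun I _ => (posSemidef_EI I).smul ?_⟩
  exact prod_nonneg fun i _ => (hlam i).le
end

section
/- Let A and B be real symmetric positive definite n×n matrices with tr(A^{−1}B) ≤ 1. Then A − B is positive semidefinite; if moreover tr(A^{−1}B) < 1, then A − B is positive definite. -/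
/-!
With `S = √A`, the matrix `C = S⁻¹ B S⁻¹` is positive semidefinite with
`tr C = tr (A⁻¹ B)`. Each eigenvalue of `C` is at most the sum of all of them, so
`C ≤ tr C • 1` in the Loewner order, and conjugating by `S` gives `B ≤ tr (A⁻¹ B) • A`.
Hence `A - B = (1 - tr (A⁻¹ B)) • A + (tr (A⁻¹ B) • A - B)` is a positive (semi)definite
matrix plus a positive semidefinite one.
-/

open scoped ComplexOrder MatrixOrder Matrix.Norms.L2Operator

namespace Matrix

variable {𝕜 n : Type*} [RCLike 𝕜] [Fintype n] [DecidableEq n]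

theorem PosSemidef.le_re_trace_smul_one {C : Matrix n n 𝕜} (hC : C.PosSemidef) :
    C ≤ RCLike.re C.trace • (1 : Matrix n n 𝕜) := by
  rw [← Algebra.algebraMap_eq_smul_one]
  refine le_algebraMap_of_spectrum_le fun x hx => ?_
  obtain ⟨i, rfl⟩ : x ∈ Set.range hC.1.eigenvalues :=
    hC.1.spectrum_real_eq_range_eigenvalues ▸ hx
  simp only [hC.1.trace_eq_sum_eigenvalues, map_sum, RCLike.ofReal_re]
  exact Finset.single_le_sum (fun j _ => hC.eigenvalues_nonneg j) (Finset.mem_univ i)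

theorem PosDef.le_re_trace_inv_mul_smul {A B : Matrix n n 𝕜} (hA : A.PosDef)
    (hB : B.PosSemidef) : B ≤ RCLike.re (A⁻¹ * B).trace • A := by
  obtain ⟨hS, hSS⟩ :=
    CStarAlgebra.isStrictlyPositive_iff_isUnit_sqrt_and_eq_sqrt_mul_sqrt.mp hA.isStrictlyPositive
  set S := CFC.sqrt A
  have hS_self : IsSelfAdjoint S := (CFC.sqrt_nonneg A).isSelfAdjoint
  have hS_det : IsUnit S.det := (isUnit_iff_isUnit_det S).mp hS
  set C := S⁻¹ * B * S⁻¹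
  have hC : C.PosSemidef := by
    simpa only [IsHermitian.inv hS_self |>.eq] using hB.conjTranspose_mul_mul_same S⁻¹
  have hC_trace : C.trace = (A⁻¹ * B).trace := by
    rw [trace_mul_comm, ← mul_assoc, ← Matrix.mul_inv_rev, ← hSS]
  have hSCS : S * C * S = B := by
    simp only [C, ← mul_assoc, mul_nonsing_inv S hS_det, one_mul]
    rw [mul_assoc, nonsing_inv_mul S hS_det, mul_one]
  calc B = S * C * S := hSCS.symm
    _ ≤ S * (RCLike.re C.trace • 1) * S :=
      hS_self.conjugate_le_conjugate hC.le_re_trace_smul_one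
    _ = RCLike.re (A⁻¹ * B).trace • A := by
      rw [hC_trace, mul_smul_comm, smul_mul_assoc, mul_one, ← hSS]

end Matrix

/-- Let `A` and `B` be real symmetric positive definite `n × n` matrices with
`tr(A⁻¹ B) ≤ 1`. Then `A - B` is positive semidefinite; if moreover `tr(A⁻¹ B) < 1`, then
`A - B` is positive definite. -/
theorem statement11 (n : ℕ) (A B : Matrix (Fin n) (Fin n) ℝ)
    (hA : A.PosDef) (hB : B.PosDef) (h : (A⁻¹ * B).trace ≤ 1) :
    (A - B).PosSemidef ∧ ((A⁻¹ * B).trace < 1 → (A - B).PosDef) := by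
  set t := (A⁻¹ * B).trace
  have hBA : (t • A - B).PosSemidef := by
    simpa only [RCLike.re_to_real] using
      Matrix.le_iff.mp (hA.le_re_trace_inv_mul_smul hB.posSemidef)
  have hsplit : A - B = (1 - t) • A + (t • A - B) := by
    rw [sub_smul, one_smul]
    abel
  rw [hsplit]
  exact ⟨(hA.posSemidef.smul (sub_nonneg.mpr h)).add hBA,
    fun hlt => (hA.smul (sub_pos.mpr hlt)).add_posSemidef hBA⟩
end
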